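/- arXiv:math/0308116 — 5 statements merged into one kernel-verified Lean document; each statement's English description precedes it below -/
import Mathlib

section
/- Let C ⊆ ℝⁿ be an open convex cone and f : C ∩ ℚⁿ → ℝ≥0 a function satisfying (i) f(q·x) = q·f(x) for all positive rationals q and x ∈ C ∩ ℚⁿ, (ii) f(x+y) ≤ f(x) + f(y) for all x, y ∈ C ∩ ℚⁿ, and (iii) there is a basis a₁,…,aₙ of ℚⁿ contained in C with f(aᵢ) = 0 for all i. Then for every x ∈ C there exist a compact neighborhood K ⊆ C of x and a constant M > 0 such that |f(x₁) − f(x₂)| ≤ M·‖x₁ − x₂‖ for all rational points x₁, x₂ ∈ K. -/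
/-!
Write `b` for the basis `a`. Subadditivity and `f (b i) = 0` make `f` non-increasing along
positive rational combinations of the `b i`; as the coordinates of a rational point in the
rational basis `b` are rational, `f p ≤ f y` whenever `p - y` lies in the open cone
`P = {w | ∀ i, 0 < b.repr w i}`. A rational `y ∈ C` with `x ∈ y + P` thus bounds `f` by `f y`
on a neighbourhood of `x`. Finally, a nonnegative function that is bounded above on a ball and
convex along rational combinations is Lipschitz on the concentric ball of half the radius:
`x₁` is a rational convex combination of `x₂` and a point `z` beyond `x₁` on the line from `x₂`,
at distance from `x₁` comparable to the radius.
-/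

/-- A point of `ℝⁿ` all of whose coordinates are rational. -/
def IsRatPoint {n : ℕ} (x : Fin n → ℝ) : Prop := ∀ i, ∃ q : ℚ, x i = (q : ℝ)

open Metric Filter Topology

namespace IsRatPoint

variable {n : ℕ} {x y : Fin n → ℝ}

lemma add (hx : IsRatPoint x) (hy : IsRatPoint y) : IsRatPoint (x + y) := fun i => by
  obtain ⟨q, hq⟩ := hx i
  obtain ⟨r, hr⟩ := hy i
  exact ⟨q + r, by simp [hq, hr]⟩

lemma sub (hx : IsRatPoint x) (hy : IsRatPoint y) : IsRatPoint (x - y) := fun i => by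
  obtain ⟨q, hq⟩ := hx i
  obtain ⟨r, hr⟩ := hy i
  exact ⟨q - r, by simp [hq, hr]⟩

lemma ratCast_smul (hx : IsRatPoint x) (q : ℚ) : IsRatPoint ((q : ℝ) • x) := fun i => by
  obtain ⟨r, hr⟩ := hx i
  exact ⟨q * r, by simp [hr]⟩

lemma mem_range_ratCast (hx : IsRatPoint x) :
    x ∈ LinearMap.range ((Algebra.linearMap ℚ ℝ).compLeft (Fin n)) := by
  choose q hq using hx
  exact ⟨q, funext fun i => (hq i).symm⟩

end IsRatPoint

lemma dense_setOf_isRatPoint (n : ℕ) : Dense {x : Fin n → ℝ | IsRatPoint x} := by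
  refine (DenseRange.piMap fun _ : Fin n => Rat.denseRange_cast (𝕜 := ℝ)).mono ?_
  rintro _ ⟨q, rfl⟩ i
  exact ⟨q i, rfl⟩

lemma Module.Basis.exists_ratCast_repr_of_isRatPoint {n : ℕ} {ι : Type*} [Fintype ι]
    (b : Module.Basis ι ℝ (Fin n → ℝ)) (hb : ∀ i, IsRatPoint (b i)) {w : Fin n → ℝ}
    (hw : IsRatPoint w) : ∃ q : ι → ℚ, ∀ i, b.repr w i = q i := by
  set J := (Algebra.linearMap ℚ ℝ).compLeft (Fin n)
  have hJ : Function.Injective J := fun p q h => funext fun i => by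
    simpa [J] using congr_fun h i
  have hspan : Submodule.span ℚ (Set.range b) = LinearMap.range J := by
    refine Submodule.eq_of_le_of_finrank_eq
      (Submodule.span_le.mpr (Set.range_subset_iff.mpr fun i => (hb i).mem_range_ratCast)) ?_
    rw [finrank_span_eq_card (b.linearIndependent.restrict_scalars' ℚ),
      LinearMap.finrank_range_of_inj hJ, ← Module.finrank_eq_card_basis b]
    simp
  have hwspan : w ∈ Submodule.span ℚ (Set.range b) := hspan ▸ hw.mem_range_ratCast
  exact ⟨fun i => (b.restrictScalars ℚ).repr ⟨w, hwspan⟩ i,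
    fun i => (b.restrictScalars_repr_apply ℚ ⟨w, hwspan⟩ i).symm⟩

section RatSublinear

variable {n : ℕ} {C : Set (Fin n → ℝ)} {f : (Fin n → ℝ) → ℝ}

lemma add_sum_smul_mem_and_apply_le (hcone : ∀ x ∈ C, ∀ c : ℝ, 0 < c → c • x ∈ C)
    (hadd : ∀ x ∈ C, ∀ y ∈ C, x + y ∈ C)
    (hhom : ∀ x ∈ C, IsRatPoint x → ∀ q : ℚ, 0 < q → f ((q : ℝ) • x) = (q : ℝ) * f x)
    (hsub : ∀ x ∈ C, ∀ y ∈ C, IsRatPoint x → IsRatPoint y → f (x + y) ≤ f x + f y)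
    {ι : Type*} {a : ι → Fin n → ℝ} (haC : ∀ i, a i ∈ C) (haQ : ∀ i, IsRatPoint (a i))
    (hzero : ∀ i, f (a i) = 0) (s : Finset ι) {q : ι → ℚ} (hq : ∀ i ∈ s, 0 < q i)
    {y : Fin n → ℝ} (hy : y ∈ C) (hyQ : IsRatPoint y) :
    y + ∑ i ∈ s, (q i : ℝ) • a i ∈ C ∧ f (y + ∑ i ∈ s, (q i : ℝ) • a i) ≤ f y := by
  induction s using Finset.cons_induction generalizing y with
  | empty => simpa using hy
  | cons j s hj ih =>
    have hqj : 0 < q j := hq j (Finset.mem_cons_self j s)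
    have hqjR : (0 : ℝ) < q j := by exact_mod_cast hqj
    have hjC : (q j : ℝ) • a j ∈ C := hcone _ (haC j) _ hqjR
    have hy' : f (y + (q j : ℝ) • a j) ≤ f y := by
      calc f (y + (q j : ℝ) • a j) ≤ f y + f ((q j : ℝ) • a j) :=
            hsub _ hy _ hjC hyQ ((haQ j).ratCast_smul _)
        _ = f y := by rw [hhom _ (haC j) (haQ j) _ hqj, hzero, mul_zero, add_zero]
    obtain ⟨hmem, hle⟩ := ih (fun i hi => hq i (Finset.mem_cons_of_mem hi))
      (hadd _ hy _ hjC) (hyQ.add ((haQ j).ratCast_smul _))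
    rw [Finset.sum_cons, ← add_assoc]
    exact ⟨hmem, hle.trans hy'⟩

lemma apply_le_of_repr_sub_pos (hcone : ∀ x ∈ C, ∀ c : ℝ, 0 < c → c • x ∈ C)
    (hadd : ∀ x ∈ C, ∀ y ∈ C, x + y ∈ C)
    (hhom : ∀ x ∈ C, IsRatPoint x → ∀ q : ℚ, 0 < q → f ((q : ℝ) • x) = (q : ℝ) * f x)
    (hsub : ∀ x ∈ C, ∀ y ∈ C, IsRatPoint x → IsRatPoint y → f (x + y) ≤ f x + f y)
    {ι : Type*} [Fintype ι] (b : Module.Basis ι ℝ (Fin n → ℝ)) (hbC : ∀ i, b i ∈ C)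
    (hbQ : ∀ i, IsRatPoint (b i)) (hzero : ∀ i, f (b i) = 0)
    {y p : Fin n → ℝ} (hy : y ∈ C) (hyQ : IsRatPoint y) (hpQ : IsRatPoint p)
    (hpos : ∀ i, 0 < b.repr (p - y) i) : f p ≤ f y := by
  obtain ⟨q, hq⟩ := b.exists_ratCast_repr_of_isRatPoint hbQ (hpQ.sub hyQ)
  have hp : p = y + ∑ i, (q i : ℝ) • b i := by
    simp_rw [← hq, b.sum_repr, add_sub_cancel]
  have hq_pos : ∀ i ∈ Finset.univ, 0 < q i := fun i _ => by
    exact_mod_cast hq i ▸ hpos i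
  rw [hp]
  exact (add_sum_smul_mem_and_apply_le hcone hadd hhom hsub hbC hbQ hzero _ hq_pos hy hyQ).2

lemma exists_nhds_forall_isRatPoint_apply_le (hopen : IsOpen C)
    (hcone : ∀ x ∈ C, ∀ c : ℝ, 0 < c → c • x ∈ C)
    (hadd : ∀ x ∈ C, ∀ y ∈ C, x + y ∈ C)
    (hnonneg : ∀ x ∈ C, IsRatPoint x → 0 ≤ f x)
    (hhom : ∀ x ∈ C, IsRatPoint x → ∀ q : ℚ, 0 < q → f ((q : ℝ) • x) = (q : ℝ) * f x)
    (hsub : ∀ x ∈ C, ∀ y ∈ C, IsRatPoint x → IsRatPoint y → f (x + y) ≤ f x + f y)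
    {ι : Type*} [Fintype ι] (b : Module.Basis ι ℝ (Fin n → ℝ)) (hbC : ∀ i, b i ∈ C)
    (hbQ : ∀ i, IsRatPoint (b i)) (hzero : ∀ i, f (b i) = 0) {x : Fin n → ℝ} (hx : x ∈ C) :
    ∃ U ∈ 𝓝 x, U ⊆ C ∧ ∃ B, 0 ≤ B ∧ ∀ p ∈ U, IsRatPoint p → f p ≤ B := by
  set P := {w | ∀ i, 0 < b.repr w i}
  have hP : IsOpen P := by
    simp only [P, Set.ofPred_forall]
    exact isOpen_iInter_of_finite fun i =>
      isOpen_lt continuous_const ((continuous_apply i).comp b.equivFunL.continuous)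
  set e := b.equivFun.symm 1
  have he : ∀ᶠ t in 𝓝 (0 : ℝ), x - t • e ∈ C :=
    (continuous_const.sub (continuous_id.smul continuous_const)).continuousAt.preimage_mem_nhds
      (by simpa using hopen.mem_nhds hx)
  obtain ⟨t, ht, htC⟩ := he.exists_gt
  obtain ⟨y, hyQ, hyC, hyP⟩ := (dense_setOf_isRatPoint n).exists_mem_open
    (hopen.inter (hP.preimage (continuous_sub_left x)))
    ⟨x - t • e, htC, fun i => by simpa [e] using ht⟩
  refine ⟨C ∩ {p | p - y ∈ P},
    (hopen.inter (hP.preimage (continuous_sub_right y))).mem_nhds ⟨hx, hyP⟩,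
    Set.inter_subset_left, f y, hnonneg y hyC hyQ, fun p hp hpQ => ?_⟩
  exact apply_le_of_repr_sub_pos hcone hadd hhom hsub b hbC hbQ hzero hyC hyQ hpQ hp.2

lemma abs_sub_le_of_forall_isRatPoint_le_on_ball
    (hcone : ∀ x ∈ C, ∀ c : ℝ, 0 < c → c • x ∈ C)
    (hnonneg : ∀ x ∈ C, IsRatPoint x → 0 ≤ f x)
    (hhom : ∀ x ∈ C, IsRatPoint x → ∀ q : ℚ, 0 < q → f ((q : ℝ) • x) = (q : ℝ) * f x)
    (hsub : ∀ x ∈ C, ∀ y ∈ C, IsRatPoint x → IsRatPoint y → f (x + y) ≤ f x + f y)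
    {x : Fin n → ℝ} {r B : ℝ} (hr : 0 < r) (hball : ball x (2 * r) ⊆ C)
    (hle : ∀ p ∈ ball x (2 * r), IsRatPoint p → f p ≤ B)
    {x₁ x₂ : Fin n → ℝ} (h₁ : x₁ ∈ closedBall x r) (h₂ : x₂ ∈ closedBall x r)
    (hq₁ : IsRatPoint x₁) (hq₂ : IsRatPoint x₂) :
    |f x₁ - f x₂| ≤ 2 * B / r * ‖x₁ - x₂‖ := by
  wlog hf : f x₂ ≤ f x₁ generalizing x₁ x₂
  · rw [abs_sub_comm, norm_sub_rev x₁ x₂]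
    exact this h₂ h₁ hq₂ hq₁ (le_of_not_ge hf)
  rw [abs_of_nonneg (sub_nonneg.mpr hf)]
  rcases eq_or_ne x₁ x₂ with rfl | hne
  · simp
  set d := ‖x₁ - x₂‖
  have hd : 0 < d := norm_pos_iff.mpr (sub_ne_zero.mpr hne)
  obtain ⟨t, ht₁, ht₂⟩ := exists_rat_btwn
    (div_lt_div_of_pos_left hr hd (by linarith) : r / (2 * d) < r / d)
  have ht : (0 : ℝ) < t := (by positivity : 0 < r / (2 * d)).trans ht₁
  have htq : (0 : ℚ) < t := by exact_mod_cast ht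
  set z := x₁ + (t : ℝ) • (x₁ - x₂)
  have hz : z ∈ ball x (2 * r) := by
    rw [mem_ball, dist_eq_norm]
    calc ‖z - x‖ = ‖(x₁ - x) + (t : ℝ) • (x₁ - x₂)‖ := by congr 1; simp only [z]; abel
      _ ≤ ‖x₁ - x‖ + ‖(t : ℝ) • (x₁ - x₂)‖ := norm_add_le _ _
      _ = ‖x₁ - x‖ + t * d := by rw [norm_smul, Real.norm_eq_abs, abs_of_pos ht]
      _ < r + r := add_lt_add_of_le_of_lt (mem_closedBall_iff_norm.mp h₁) ((lt_div_iff₀ hd).mp ht₂)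
      _ = 2 * r := by ring
  have hzQ : IsRatPoint z := hq₁.add ((hq₁.sub hq₂).ratCast_smul t)
  have hx₁C : x₁ ∈ C := hball (closedBall_subset_ball (by linarith) h₁)
  have hx₂C : x₂ ∈ C := hball (closedBall_subset_ball (by linarith) h₂)
  -- `x₁` is the convex combination `(z + t x₂) / (1 + t)` with rational weights
  have hconv : (1 + t : ℝ) * f x₁ ≤ f z + t * f x₂ := by
    have hsplit : ((1 + t : ℚ) : ℝ) • x₁ = z + (t : ℝ) • x₂ := by
      simp only [z, Rat.cast_add, Rat.cast_one]
      module
    calc (1 + t : ℝ) * f x₁ = f (((1 + t : ℚ) : ℝ) • x₁) := by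
          rw [hhom x₁ hx₁C hq₁ _ (by positivity)]; push_cast; ring
      _ = f (z + (t : ℝ) • x₂) := by rw [hsplit]
      _ ≤ f z + f ((t : ℝ) • x₂) :=
          hsub _ (hball hz) _ (hcone _ hx₂C _ ht) hzQ (hq₂.ratCast_smul t)
      _ = f z + t * f x₂ := by rw [hhom x₂ hx₂C hq₂ t htq]
  have hfz := hle z hz hzQ
  have hfx₂ := hnonneg x₂ hx₂C hq₂
  have hΔ : r / (2 * d) * (f x₁ - f x₂) ≤ B := by nlinarith
  calc f x₁ - f x₂ = r / (2 * d) * (f x₁ - f x₂) * (2 * d / r) := by field_simp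
    _ ≤ B * (2 * d / r) := by gcongr
    _ = 2 * B / r * d := by ring

end RatSublinear

theorem stmt0 {n : ℕ} (C : Set (Fin n → ℝ)) (f : (Fin n → ℝ) → ℝ)
    (hopen : IsOpen C)
    (hcone : ∀ x ∈ C, ∀ c : ℝ, 0 < c → c • x ∈ C)
    (hadd : ∀ x ∈ C, ∀ y ∈ C, x + y ∈ C)
    (hnonneg : ∀ x ∈ C, IsRatPoint x → 0 ≤ f x)
    (hhom : ∀ x ∈ C, IsRatPoint x → ∀ q : ℚ, 0 < q → f ((q : ℝ) • x) = (q : ℝ) * f x)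
    (hsub : ∀ x ∈ C, ∀ y ∈ C, IsRatPoint x → IsRatPoint y → f (x + y) ≤ f x + f y)
    (a : Fin n → (Fin n → ℝ))
    (haC : ∀ i, a i ∈ C) (haQ : ∀ i, IsRatPoint (a i))
    (hbasis : LinearIndependent ℝ a)
    (hzero : ∀ i, f (a i) = 0) :
    ∀ x ∈ C, ∃ K : Set (Fin n → ℝ), IsCompact K ∧ K ⊆ C ∧ K ∈ nhds x ∧
      ∃ M : ℝ, 0 < M ∧ ∀ x₁ ∈ K, ∀ x₂ ∈ K, IsRatPoint x₁ → IsRatPoint x₂ →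
        |f x₁ - f x₂| ≤ M * ‖x₁ - x₂‖ := by
  intro x hx
  let b := basisOfLinearIndependentOfCardEqFinrank' a hbasis (by simp)
  obtain ⟨U, hU, hUC, B, hB, hUB⟩ := exists_nhds_forall_isRatPoint_apply_le hopen hcone hadd
    hnonneg hhom hsub b (by simpa [b] using haC) (by simpa [b] using haQ)
    (by simpa [b] using hzero) hx
  obtain ⟨ε, hε, hεU⟩ := Metric.mem_nhds_iff.mp hU
  set r := ε / 2
  have hr : 0 < r := by positivity
  have hball : ball x (2 * r) ⊆ U := by rwa [mul_div_cancel₀ ε two_ne_zero]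
  refine ⟨closedBall x r, isCompact_closedBall x r,
    (closedBall_subset_ball (by linarith)).trans (hball.trans hUC),
    closedBall_mem_nhds x hr, 2 * B / r + 1, by positivity, fun x₁ h₁ x₂ h₂ hq₁ hq₂ => ?_⟩
  calc |f x₁ - f x₂| ≤ 2 * B / r * ‖x₁ - x₂‖ :=
        abs_sub_le_of_forall_isRatPoint_le_on_ball hcone hnonneg hhom hsub hr
          (hball.trans hUC) (fun p hp => hUB p (hball hp)) h₁ h₂ hq₁ hq₂
    _ ≤ (2 * B / r + 1) * ‖x₁ - x₂‖ := by gcongr; linarith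
end

section
/- Let R be a DVR with valuation v, and let (𝔞_p), (𝔟_p), (𝔠_p) be graded systems of nonzero ideals of R such that 𝔞_p · 𝔟_p ⊆ 𝔠_p for all p. Then the asymptotic orders satisfy v(𝔠_•) ≤ v(𝔞_•) + v(𝔟_•), where v(𝔡_•) := lim_p v(𝔡_p)/p. -/
/-!
Raising to complementary powers puts both systems in the same degree: `𝔞_p ^ q · 𝔟_q ^ p`
lies in `𝔞_{pq} · 𝔟_{pq} ⊆ 𝔠_{pq}`. In a DVR, containment of powers of the maximal ideal
reverses the exponents, so `v(𝔠_{pq}) ≤ q·v(𝔞_p) + p·v(𝔟_q)`; dividing by `pq` and taking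
infima over `p` and `q` separately gives the inequality.
-/

namespace Ideal

variable {R : Type*} [CommSemiring R]

theorem pow_le_of_graded (a : ℕ → Ideal R) (ha0 : a 0 = ⊤)
    (hagr : ∀ p q, a p * a q ≤ a (p + q)) (p q : ℕ) : a p ^ q ≤ a (p * q) := by
  induction q with
  | zero => simp [ha0]
  | succ n ih =>
    calc a p ^ (n + 1) = a p ^ n * a p := pow_succ _ _
      _ ≤ a (p * n) * a p := mul_mono_left ih
      _ ≤ a (p * n + p) := hagr _ _
      _ = a (p * (n + 1)) := by rw [mul_add_one]

theorem pow_mul_pow_le_of_graded (a b c : ℕ → Ideal R)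
    (ha0 : a 0 = ⊤) (hagr : ∀ p q, a p * a q ≤ a (p + q))
    (hb0 : b 0 = ⊤) (hbgr : ∀ p q, b p * b q ≤ b (p + q))
    (hmul : ∀ p, a p * b p ≤ c p) (p q : ℕ) : a p ^ q * b q ^ p ≤ c (p * q) :=
  calc a p ^ q * b q ^ p ≤ a (p * q) * b (q * p) :=
        mul_mono (pow_le_of_graded a ha0 hagr p q) (pow_le_of_graded b hb0 hbgr q p)
    _ ≤ c (p * q) := by rw [Nat.mul_comm q p]; exact hmul _

end Ideal

theorem IsDiscreteValuationRing.maximalIdeal_pow_le_pow_iff {R : Type*} [CommRing R]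
    [IsDomain R] [IsDiscreteValuationRing R] {n k : ℕ} :
    IsLocalRing.maximalIdeal R ^ n ≤ IsLocalRing.maximalIdeal R ^ k ↔ k ≤ n := by
  obtain ⟨ϖ, hϖ⟩ := exists_irreducible R
  rw [(irreducible_iff_uniformizer ϖ).mp hϖ, Ideal.span_singleton_pow, Ideal.span_singleton_pow,
    Ideal.span_singleton_le_span_singleton]
  exact pow_dvd_pow_iff hϖ.ne_zero hϖ.not_isUnit

theorem iInf_div_le_iInf_div_add_iInf_div {f g h : ℕ → ℕ}
    (hfgh : ∀ p q, h (p * q) ≤ q * f p + p * g q) :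
    (⨅ p : {k : ℕ // 0 < k}, (h p.val : ℝ) / p.val) ≤
      (⨅ p : {k : ℕ // 0 < k}, (f p.val : ℝ) / p.val) +
        (⨅ p : {k : ℕ // 0 < k}, (g p.val : ℝ) / p.val) := by
  have : Nonempty {k : ℕ // 0 < k} := ⟨⟨1, one_pos⟩⟩
  have hbdd : BddBelow (Set.range fun p : {k : ℕ // 0 < k} => (h p.val : ℝ) / p.val) :=
    ⟨0, by rintro x ⟨r, rfl⟩; positivity⟩
  refine le_ciInf_add_ciInf fun ⟨p, hp⟩ ⟨q, hq⟩ => ciInf_le_of_le hbdd ⟨p * q, by positivity⟩ ?_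
  have hp' : (p : ℝ) ≠ 0 := by positivity
  have hq' : (q : ℝ) ≠ 0 := by positivity
  rw [div_add_div _ _ hp' hq', Nat.cast_mul]
  gcongr
  calc (h (p * q) : ℝ) ≤ ((q * f p + p * g q : ℕ) : ℝ) := by exact_mod_cast hfgh p q
    _ = f p * q + p * g q := by push_cast; ring

theorem stmt6_general {R : Type*} [CommRing R] [IsDomain R] [IsDiscreteValuationRing R]
    (a b c : ℕ → Ideal R)
    (ha0 : a 0 = ⊤) (hagr : ∀ p q, a p * a q ≤ a (p + q))
    (hb0 : b 0 = ⊤) (hbgr : ∀ p q, b p * b q ≤ b (p + q))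
    (hmul : ∀ p, a p * b p ≤ c p)
    (va vb vc : ℕ → ℕ)
    (hva : ∀ p, a p = IsLocalRing.maximalIdeal R ^ va p)
    (hvb : ∀ p, b p = IsLocalRing.maximalIdeal R ^ vb p)
    (hvc : ∀ p, c p = IsLocalRing.maximalIdeal R ^ vc p) :
    (⨅ p : {k : ℕ // 0 < k}, (vc p.val : ℝ) / (p.val : ℝ)) ≤
      (⨅ p : {k : ℕ // 0 < k}, (va p.val : ℝ) / (p.val : ℝ)) +
        (⨅ p : {k : ℕ // 0 < k}, (vb p.val : ℝ) / (p.val : ℝ)) := by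
  refine iInf_div_le_iInf_div_add_iInf_div fun p q => ?_
  have hpq := Ideal.pow_mul_pow_le_of_graded a b c ha0 hagr hb0 hbgr hmul p q
  rw [hva, hvb, hvc, ← pow_mul, ← pow_mul, ← pow_add,
    IsDiscreteValuationRing.maximalIdeal_pow_le_pow_iff] at hpq
  linarith

/-- If `(𝔞_p)`, `(𝔟_p)`, `(𝔠_p)` are graded systems of nonzero ideals in a DVR with
`𝔞_p · 𝔟_p ⊆ 𝔠_p` for all `p`, then the asymptotic orders (which equal the infima of
`v(·_p)/p` over `p ≥ 1`) satisfy `v(𝔠_•) ≤ v(𝔞_•) + v(𝔟_•)`. -/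
theorem stmt6 {R : Type*} [CommRing R] [IsDomain R] [IsDiscreteValuationRing R]
    (a b c : ℕ → Ideal R)
    (ha0 : a 0 = ⊤) (hane : ∀ p, a p ≠ ⊥) (hagr : ∀ p q, a p * a q ≤ a (p + q))
    (hb0 : b 0 = ⊤) (hbne : ∀ p, b p ≠ ⊥) (hbgr : ∀ p q, b p * b q ≤ b (p + q))
    (hc0 : c 0 = ⊤) (hcne : ∀ p, c p ≠ ⊥) (hcgr : ∀ p q, c p * c q ≤ c (p + q))
    (hmul : ∀ p, a p * b p ≤ c p)
    (va vb vc : ℕ → ℕ)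
    (hva : ∀ p, a p = IsLocalRing.maximalIdeal R ^ va p)
    (hvb : ∀ p, b p = IsLocalRing.maximalIdeal R ^ vb p)
    (hvc : ∀ p, c p = IsLocalRing.maximalIdeal R ^ vc p) :
    (⨅ p : {k : ℕ // 0 < k}, (vc p.val : ℝ) / (p.val : ℝ)) ≤
      (⨅ p : {k : ℕ // 0 < k}, (va p.val : ℝ) / (p.val : ℝ)) +
        (⨅ p : {k : ℕ // 0 < k}, (vb p.val : ℝ) / (p.val : ℝ)) :=
  stmt6_general a b c ha0 hagr hb0 hbgr hmul va vb vc hva hvb hvc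
end

section
/- Let R be a DVR with valuation v, (𝔞_p) and (𝔧_p) graded/co-graded systems of nonzero ideals with 𝔞_p ⊆ 𝔧_p for all p, 𝔧_{p+q} ⊆ 𝔧_p · 𝔧_q for all p, q, and suppose there exists a nonzero u ∈ R such that u·𝔧_p ⊆ 𝔞_p for all sufficiently large p. Then lim_p v(𝔞_p)/p = lim_p v(𝔧_p)/p (both limits exist). -/
open Filter

/-- Comparison of a graded system `(𝔞_p)` with a co-graded system `(𝔧_p)`
(`𝔧_{p+q} ⊆ 𝔧_p · 𝔧_q`) of nonzero ideals in a DVR: if `𝔞_p ⊆ 𝔧_p` for all `p` and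
`u · 𝔧_p ⊆ 𝔞_p` for some fixed nonzero `u` and all large `p`, then
`lim v(𝔞_p)/p = lim v(𝔧_p)/p`, both limits existing. -/
theorem stmt7 {R : Type*} [CommRing R] [IsDomain R] [IsDiscreteValuationRing R]
    (a j : ℕ → Ideal R)
    (ha0 : a 0 = ⊤) (hane : ∀ p, a p ≠ ⊥) (hagr : ∀ p q, a p * a q ≤ a (p + q))
    (hjne : ∀ p, j p ≠ ⊥) (hjgr : ∀ p q, j (p + q) ≤ j p * j q)
    (haj : ∀ p, a p ≤ j p)
    (hu : ∃ u : R, u ≠ 0 ∧ ∃ N : ℕ, ∀ p ≥ N, Ideal.span {u} * j p ≤ a p)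
    (va vj : ℕ → ℕ)
    (hva : ∀ p, a p = IsLocalRing.maximalIdeal R ^ va p)
    (hvj : ∀ p, j p = IsLocalRing.maximalIdeal R ^ vj p) :
    ∃ L : ℝ, Tendsto (fun p : ℕ => (va p : ℝ) / p) atTop (nhds L) ∧
      Tendsto (fun p : ℕ => (vj p : ℝ) / p) atTop (nhds L) := by
  obtain ⟨ϖ, hϖ⟩ := IsDiscreteValuationRing.exists_irreducible R
  have hm : IsLocalRing.maximalIdeal R = Ideal.span {ϖ} :=
    (IsDiscreteValuationRing.irreducible_iff_uniformizer ϖ).mp hϖ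
  have hϖ0 : ϖ ≠ 0 := hϖ.ne_zero
  -- key : m^s ≤ m^t ↔ t ≤ s
  have key : ∀ s t : ℕ, (IsLocalRing.maximalIdeal R) ^ s ≤ (IsLocalRing.maximalIdeal R) ^ t
      ↔ t ≤ s := by
    intro s t
    rw [hm, Ideal.span_singleton_pow, Ideal.span_singleton_pow,
      Ideal.span_singleton_le_span_singleton, pow_dvd_pow_iff hϖ0 hϖ.not_isUnit]
  -- subadditivity of va
  have hsub : ∀ p q, va (p + q) ≤ va p + va q := by
    intro p q
    have := hagr p q
    rw [hva, hva, hva, ← pow_add] at this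
    exact (key _ _).mp this
  -- vj p ≤ va p
  have hle : ∀ p, vj p ≤ va p := by
    intro p
    have := haj p
    rw [hva, hvj] at this
    exact (key _ _).mp this
  -- bound va p ≤ vj p + c eventually
  obtain ⟨u, hu0, N, hN⟩ := hu
  obtain ⟨c, hc⟩ := IsDiscreteValuationRing.ideal_eq_span_pow_irreducible
    (Ideal.span_singleton_eq_bot.not.mpr hu0) hϖ
  have hcm : Ideal.span {u} = (IsLocalRing.maximalIdeal R) ^ c := by
    rw [hc, hm, Ideal.span_singleton_pow]
  have hub : ∀ p ≥ N, va p ≤ c + vj p := by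
    intro p hp
    have := hN p hp
    rw [hcm, hvj, hva, ← pow_add] at this
    exact (key _ _).mp this
  -- Fekete
  have hsubR : Subadditive (fun p : ℕ => (va p : ℝ)) := by
    intro m n
    show (va (m+n):ℝ) ≤ va m + va n
    exact_mod_cast hsub m n
  have hbdd : BddBelow (Set.range fun n : ℕ => (va n : ℝ) / n) :=
    ⟨0, by rintro x ⟨n, rfl⟩; positivity⟩
  refine ⟨hsubR.lim, hsubR.tendsto_lim hbdd, ?_⟩
  have hA := hsubR.tendsto_lim hbdd
  have hB : Tendsto (fun p : ℕ => ((va p : ℝ) - c) / p) atTop (nhds hsubR.lim) := by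
    have hc0 : Tendsto (fun p : ℕ => (c : ℝ) / p) atTop (nhds 0) :=
      tendsto_const_nhds.div_atTop tendsto_natCast_atTop_atTop
    simpa [sub_div] using hA.sub hc0
  refine tendsto_of_tendsto_of_tendsto_of_le_of_le' hB hA ?_ ?_
  · filter_upwards [eventually_ge_atTop (max N 1)] with p hp
    have h1 := hub p (le_of_max_le_left hp)
    have hp0 : (0:ℝ) < p := by
      have : 1 ≤ p := le_of_max_le_right hp
      exact_mod_cast this
    apply div_le_div_of_nonneg_right ?_ hp0.le
    have : (va p : ℝ) ≤ c + vj p := by exact_mod_cast h1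
    linarith
  · filter_upwards [eventually_ge_atTop 1] with p hp
    have hp0 : (0:ℝ) < p := by exact_mod_cast hp
    exact div_le_div_of_nonneg_right (by exact_mod_cast hle p) hp0.le
end

section
/- Let R₀ be a Noetherian ring and R = ⊕_{m∈ℕ} R_m an ℕ-graded finitely generated R₀-algebra. Then there exists a positive integer d such that R_{dm} = (R_d)^m for all positive integers m. -/
/-!
Choose finitely many homogeneous generators `v i` of degrees `δ i` and let `e` be the product of
the nonzero degrees. Then `R_N` is spanned by the monomials `∏ v i ^ a i` of weight `a ⬝ᵥ δ = N`.
If a monomial has weight larger than `n e` (with `n` the number of generators), some single factor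
`v i ^ a i` has weight larger than `e`, so a submonomial of weight exactly `e` splits off; repeating,
any monomial of weight at least `(n + k) e` has a submonomial of weight `k e`. With `d = (n + 1) e`,
every monomial of weight `d (m + 1)` is thus a monomial of weight `d` times one of weight `d m`,
and induction on `m` gives `R_{dm} ⊆ (R_d)^m`.
-/

open Matrix

section Combinatorics

variable {σ : Type*} [Fintype σ] [DecidableEq σ] {δ : σ → ℕ} {e : ℕ}

theorem exists_le_dotProduct_eq_of_card_mul_lt (hdvd : ∀ i, δ i ≠ 0 → δ i ∣ e) {a : σ → ℕ}
    (h : Fintype.card σ * e < a ⬝ᵥ δ) : ∃ b ≤ a, b ⬝ᵥ δ = e := by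
  have hsum : ∑ _i : σ, e < ∑ i, a i * δ i := by simpa [dotProduct] using h
  obtain ⟨i, -, hi⟩ := Finset.exists_lt_of_sum_lt hsum
  have hδ : δ i ≠ 0 := fun h0 => by simp [h0] at hi
  obtain ⟨c, rfl⟩ := hdvd i hδ
  have hc : c ≤ a i := (Nat.lt_of_mul_lt_mul_left (by rwa [mul_comm (a i)] at hi)).le
  refine ⟨Pi.single i c, fun j => ?_, by rw [single_dotProduct, mul_comm]⟩
  rcases eq_or_ne j i with rfl | hj
  · simpa using hc
  · simp [hj]

theorem exists_le_dotProduct_eq_mul (he : 0 < e) (hdvd : ∀ i, δ i ≠ 0 → δ i ∣ e) (k : ℕ)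
    {a : σ → ℕ} (h : (Fintype.card σ + k) * e ≤ a ⬝ᵥ δ) : ∃ b ≤ a, b ⬝ᵥ δ = k * e := by
  induction k generalizing a with
  | zero => exact ⟨0, fun _ => Nat.zero_le _, by simp⟩
  | succ k ih =>
    obtain ⟨b₁, hb₁a, hb₁⟩ :=
      exists_le_dotProduct_eq_of_card_mul_lt hdvd (a := a) (by nlinarith)
    have hsplit : (a - b₁) ⬝ᵥ δ + e = a ⬝ᵥ δ := by
      rw [← hb₁, ← add_dotProduct, tsub_add_cancel_of_le hb₁a]
    obtain ⟨b, hba, hb⟩ := ih (a := a - b₁) (by nlinarith)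
    refine ⟨b + b₁, ?_, by rw [add_dotProduct, hb, hb₁, add_one_mul]⟩
    calc b + b₁ ≤ a - b₁ + b₁ := add_le_add_left hba b₁
      _ = a := tsub_add_cancel_of_le hb₁a

theorem exists_le_dotProduct_eq_and_sub (he : 0 < e) (hdvd : ∀ i, δ i ≠ 0 → δ i ∣ e) {m : ℕ}
    (hm : 0 < m) {a : σ → ℕ} (ha : a ⬝ᵥ δ = (Fintype.card σ + 1) * e * (m + 1)) :
    ∃ b ≤ a, b ⬝ᵥ δ = (Fintype.card σ + 1) * e ∧
      (a - b) ⬝ᵥ δ = (Fintype.card σ + 1) * e * m := by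
  obtain ⟨b, hba, hb⟩ := exists_le_dotProduct_eq_mul he hdvd (Fintype.card σ + 1) (a := a)
    (by rw [ha]; nlinarith)
  refine ⟨b, hba, hb, ?_⟩
  have hsum := add_dotProduct b (a - b) δ
  rw [add_tsub_cancel_of_le hba, ha, hb] at hsum
  linarith

end Combinatorics

section Graded

variable {ι R A : Type*} [DecidableEq ι] [AddCommMonoid ι] [CommSemiring R] [CommSemiring A]
  [Algebra R A] (𝒜 : ι → Submodule R A) [GradedAlgebra 𝒜]

theorem GradedAlgebra.exists_finset_adjoin_eq_top_and_isHomogeneousElem [Algebra.FiniteType R A] :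
    ∃ s : Finset A, Algebra.adjoin R (s : Set A) = ⊤ ∧
      ∀ x ∈ s, SetLike.IsHomogeneousElem 𝒜 x := by
  classical
  obtain ⟨s, hs⟩ := Algebra.FiniteType.out (R := R) (A := A)
  refine ⟨s.biUnion fun x => (DirectSum.decompose 𝒜 x).support.image
    fun i => (DirectSum.decompose 𝒜 x i : A), ?_, ?_⟩
  · rw [eq_top_iff, ← hs, Algebra.adjoin_le_iff]
    intro x hx
    rw [← DirectSum.sum_support_decompose 𝒜 x]
    exact sum_mem fun i hi => Algebra.subset_adjoin
      (by simpa using ⟨x, hx, i, DFinsupp.mem_support_iff.1 hi, rfl⟩)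
  · simp only [Finset.mem_biUnion, Finset.mem_image]
    rintro _ ⟨x, -, i, -, rfl⟩
    exact ⟨i, (DirectSum.decompose 𝒜 x i).2⟩

theorem GradedAlgebra.grade_eq_span_prod_pow {σ : Type*} [Fintype σ] (v : σ → A) (δ : σ → ι)
    (hv : ∀ i, v i ∈ 𝒜 (δ i)) (hadj : Algebra.adjoin R (Set.range v) = ⊤) (n : ι) :
    𝒜 n = Submodule.span R
      ((fun a : σ → ℕ => ∏ i, v i ^ a i) '' {a | ∑ i, a i • δ i = n}) := by
  refine le_antisymm (fun x hx => ?_) ?_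
  · have hx' : x ∈ Submodule.span R (Submonoid.closure (Set.range v) : Set A) := by
      rw [← Algebra.adjoin_eq_span, hadj]; trivial
    -- the projection to degree `n` fixes `x` and kills every monomial of another degree
    have hproj : Submodule.span R (Submonoid.closure (Set.range v) : Set A) ≤
        (Submodule.span R ((fun a : σ → ℕ => ∏ i, v i ^ a i) '' {a | ∑ i, a i • δ i = n})).comap
          (GradedAlgebra.proj 𝒜 n) := by
      rw [Submodule.span_le]
      intro y hy
      obtain ⟨a, rfl⟩ := Submonoid.exists_of_mem_closure_range v y hy
      have hmem := SetLike.prod_pow_mem_graded 𝒜 δ v a (F := Finset.univ) fun i _ => hv i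
      rw [SetLike.mem_coe, Submodule.mem_comap, GradedAlgebra.proj_apply]
      by_cases ha : ∑ i, a i • δ i = n
      · rw [DirectSum.decompose_of_mem_same 𝒜 (ha ▸ hmem)]
        exact Submodule.subset_span ⟨a, ha, rfl⟩
      · rw [DirectSum.decompose_of_mem_ne 𝒜 hmem ha]
        exact zero_mem _
    simpa only [Submodule.mem_comap, GradedAlgebra.proj_apply,
      DirectSum.decompose_of_mem_same 𝒜 hx] using hproj hx'
  · rw [Submodule.span_le]
    rintro _ ⟨a, ha, rfl⟩
    exact ha ▸ SetLike.prod_pow_mem_graded 𝒜 δ v a fun i _ => hv i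

end Graded

section NatGraded

variable {R A : Type*} [CommSemiring R] [CommSemiring A] [Algebra R A]
  (𝒜 : ℕ → Submodule R A) [GradedAlgebra 𝒜]

theorem GradedAlgebra.pow_le_grade_mul (d m : ℕ) : 𝒜 d ^ m ≤ 𝒜 (d * m) := by
  induction m with
  | zero => exact Submodule.one_le.2 (SetLike.one_mem_graded 𝒜)
  | succ m ih =>
    rw [pow_succ, mul_add_one]
    exact Submodule.mul_le.2 fun _ hx _ hy => SetLike.mul_mem_graded (ih hx) hy

theorem GradedAlgebra.prod_pow_mem_pow {σ : Type*} [Fintype σ] (v : σ → A) {δ : σ → ℕ}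
    (hv : ∀ i, v i ∈ 𝒜 (δ i)) {d : ℕ}
    (hsplit : ∀ m, 0 < m → ∀ a : σ → ℕ, a ⬝ᵥ δ = d * (m + 1) →
      ∃ b ≤ a, b ⬝ᵥ δ = d ∧ (a - b) ⬝ᵥ δ = d * m)
    {m : ℕ} (hm : 0 < m) {a : σ → ℕ} (ha : a ⬝ᵥ δ = d * m) :
    ∏ i, v i ^ a i ∈ 𝒜 d ^ m := by
  have hmem (b : σ → ℕ) : ∏ i, v i ^ b i ∈ 𝒜 (b ⬝ᵥ δ) :=
    SetLike.prod_pow_mem_graded 𝒜 δ v b fun i _ => hv i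
  induction m, hm using Nat.le_induction generalizing a with
  | base => simpa [ha] using hmem a
  | succ m hm ih =>
    obtain ⟨b, hba, hb, hrest⟩ := hsplit m hm a ha
    have hprod : ∏ i, v i ^ a i = (∏ i, v i ^ b i) * ∏ i, v i ^ (a - b) i := by
      rw [← Finset.prod_mul_distrib]
      refine Finset.prod_congr rfl fun i _ => ?_
      rw [← pow_add, Pi.sub_apply, Nat.add_sub_cancel' (hba i)]
    rw [hprod, pow_succ']
    exact Submodule.mul_mem_mul (hb ▸ hmem b) (ih hrest)

end NatGraded

theorem stmt9_general {A₀ A : Type*} [CommRing A₀] [CommRing A] [Algebra A₀ A]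
    (𝒜 : ℕ → Submodule A₀ A) [GradedAlgebra 𝒜] (hfg : Algebra.FiniteType A₀ A) :
    ∃ d : ℕ, 0 < d ∧ ∀ m : ℕ, 0 < m → 𝒜 (d * m) = 𝒜 d ^ m := by
  classical
  obtain ⟨s, hadj, hhom⟩ := GradedAlgebra.exists_finset_adjoin_eq_top_and_isHomogeneousElem 𝒜
  choose δ hv using fun x : s => hhom x x.2
  set e := ∏ i ∈ Finset.univ.filter (δ · ≠ 0), δ i
  have he : 0 < e := Finset.prod_pos fun i hi => Nat.pos_of_ne_zero (Finset.mem_filter.1 hi).2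
  have hdvd (i : s) (hi : δ i ≠ 0) : δ i ∣ e := Finset.dvd_prod_of_mem δ (by simp [hi])
  refine ⟨(Fintype.card s + 1) * e, by positivity, fun m hm => ?_⟩
  refine le_antisymm ?_ (GradedAlgebra.pow_le_grade_mul 𝒜 _ m)
  rw [GradedAlgebra.grade_eq_span_prod_pow 𝒜 Subtype.val δ hv (by rwa [Subtype.range_coe]),
    Submodule.span_le]
  rintro _ ⟨a, ha, rfl⟩
  exact GradedAlgebra.prod_pow_mem_pow 𝒜 Subtype.val hv
    (fun _ hk _ hb => exists_le_dotProduct_eq_and_sub he hdvd hk hb) hm ha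

/-- Bourbaki's lemma (Lemma 4.4): if `R₀` is Noetherian and `R = ⊕_{m ∈ ℕ} R_m` is an
`ℕ`-graded finitely generated `R₀`-algebra, then there is `d > 0` with
`R_{dm} = (R_d)^m` for all `m > 0`. -/
theorem stmt9 {A₀ A : Type*} [CommRing A₀] [CommRing A] [Algebra A₀ A]
    [IsNoetherianRing A₀]
    (𝒜 : ℕ → Submodule A₀ A) [GradedAlgebra 𝒜] (hfg : Algebra.FiniteType A₀ A) :
    ∃ d : ℕ, 0 < d ∧ ∀ m : ℕ, 0 < m → 𝒜 (d * m) = 𝒜 d ^ m :=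
  stmt9_general 𝒜 hfg
end

section
/- Let N ⊆ N_ℝ be a lattice and C ⊆ N_ℝ a rational polyhedral strongly convex cone. Let S = C ∩ N and let m₁,…,m_p be the primitive integral generators of the rays of C. Then there exists a positive integer d such that for every m ∈ S, the element d·m lies in the subsemigroup of N generated by m₁,…,m_p. -/
/-!
By Carathéodory's theorem for cones, every point of `C` is a nonnegative combination of a
linearly independent subfamily `(g i)_{i ∈ t}`. If `A` is the integer matrix with rows `g i`,
`i ∈ t`, its Gram determinant `δ_t = det (A Aᵀ)` is positive, and Cramer's rule turns
`c A = m` into `δ_t c = m Aᵀ adj (A Aᵀ)`, an integer vector, nonnegative since `c` is. So `δ_t m`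
is a nonnegative integer combination of the `g i`, and `d = ∏ δ_t` over all independent `t`
works for every lattice point `m` of `C`.
-/

open Function Matrix

section ConicCaratheodory

variable {𝕜 ι : Type*} [Field 𝕜] [LinearOrder 𝕜] [IsStrictOrderedRing 𝕜] [Fintype ι]

theorem exists_nonneg_sub_smul_support_ssubset {c μ : ι → 𝕜} (hc : 0 ≤ c)
    (hμc : support μ ⊆ support c) (hμ : ∃ i, 0 < μ i) :
    ∃ ρ : 𝕜, 0 ≤ c - ρ • μ ∧ support (c - ρ • μ) ⊂ support c := by
  classical
  obtain ⟨k, hk, hmin⟩ := (Finset.univ.filter fun i => 0 < μ i).exists_min_image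
    (fun i => c i / μ i) (by simpa [Finset.Nonempty] using hμ)
  simp only [Finset.mem_filter, Finset.mem_univ, true_and] at hk hmin
  refine ⟨c k / μ k, fun i => ?_, ?_⟩
  · rw [Pi.zero_apply, Pi.sub_apply, Pi.smul_apply, smul_eq_mul, sub_nonneg]
    rcases lt_or_ge 0 (μ i) with hi | hi
    · exact (le_div_iff₀ hi).mp (hmin i hi)
    · exact (mul_nonpos_of_nonneg_of_nonpos (div_nonneg (hc k) hk.le) hi).trans (hc i)
  · have hsub : support (c - (c k / μ k) • μ) ⊆ support c := fun i hi hci => by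
      have hμi : μ i = 0 := not_not.mp fun h => hμc h hci
      simp [hci, hμi] at hi
    refine (Set.ssubset_iff_of_subset hsub).mpr ⟨k, hμc hk.ne', ?_⟩
    simp [div_mul_cancel₀ _ hk.ne']

variable {M : Type*} [AddCommGroup M] [Module 𝕜 M]

theorem exists_pos_relation_of_not_linearIndepOn {v : ι → M} {s : Set ι}
    (h : ¬LinearIndepOn 𝕜 v s) :
    ∃ μ : ι → 𝕜, support μ ⊆ s ∧ ∑ i, μ i • v i = 0 ∧ ∃ i, 0 < μ i := by
  obtain ⟨f, hfs, hf0, hne⟩ := linearDepOn_iff'.mp h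
  obtain ⟨i, hi⟩ := Finsupp.ne_iff.mp hne
  have hsupp : support f ⊆ s := by
    rw [Finsupp.fun_support_eq]
    exact (Finsupp.mem_supported 𝕜 f).mp hfs
  have hsum : ∑ j, f j • v j = 0 := by
    rwa [Finsupp.linearCombination_apply, Finsupp.sum_fintype _ _ (by simp)] at hf0
  rcases (show f i ≠ 0 from hi).lt_or_gt with hneg | hpos
  · exact ⟨-f, by simpa using hsupp, by simp [hsum], i, by simpa using hneg⟩
  · exact ⟨f, hsupp, hsum, i, hpos⟩

/-- Carathéodory's theorem for cones. -/
theorem exists_nonneg_linearIndepOn_support_sum_smul_eq (v : ι → M) {c : ι → 𝕜} (hc : 0 ≤ c) :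
    ∃ c' : ι → 𝕜, 0 ≤ c' ∧ LinearIndepOn 𝕜 v (support c') ∧
      ∑ i, c' i • v i = ∑ i, c i • v i := by
  obtain ⟨c', ⟨hc', hsum⟩, hmin⟩ := (measure fun c : ι → 𝕜 => (support c).ncard).wf.has_min
    {c' | 0 ≤ c' ∧ ∑ i, c' i • v i = ∑ i, c i • v i} ⟨c, hc, rfl⟩
  refine ⟨c', hc', by_contra fun hdep => ?_, hsum⟩
  obtain ⟨μ, hμc, hμv, hμ⟩ := exists_pos_relation_of_not_linearIndepOn hdep
  obtain ⟨ρ, hρ, hlt⟩ := exists_nonneg_sub_smul_support_ssubset hc' hμc hμ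
  refine hmin (c' - ρ • μ) ⟨hρ, ?_⟩ (Set.ncard_lt_ncard hlt)
  simp [sub_smul, Finset.sum_sub_distrib, mul_smul, ← Finset.smul_sum, hμv, hsum]

end ConicCaratheodory

namespace Matrix

variable {ι κ : Type*} [Fintype ι] [Fintype κ] [DecidableEq ι]

theorem det_mul_transpose_pos_of_injective (A : Matrix ι κ ℤ)
    (hA : Injective fun c : ι → ℝ => c ᵥ* A.map (↑)) :
    0 < (A * Aᵀ).det := by
  have hpos := (PosDef.mul_conjTranspose_self (A.map (Int.castRingHom ℝ)) hA).det_pos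
  rw [conjTranspose_eq_transpose_of_trivial, ← transpose_map, ← Matrix.map_mul,
    ← RingHom.mapMatrix_apply, ← RingHom.map_det] at hpos
  simpa using hpos

/-- Cramer's rule for the Gram matrix `A * Aᵀ`. -/
theorem det_mul_transpose_smul_eq_of_vecMul_eq (A : Matrix ι κ ℤ) {c : ι → ℝ} {m : κ → ℤ}
    (h : c ᵥ* A.map (↑) = fun j => (m j : ℝ)) :
    ((A * Aᵀ).det : ℝ) • c = fun i => ((m ᵥ* (Aᵀ * (A * Aᵀ).adjugate)) i : ℝ) := by
  set f := Int.castRingHom ℝ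
  have hadj : (A * Aᵀ).adjugate.map f = ((A * Aᵀ).map f).adjugate := f.map_adjugate _
  calc ((A * Aᵀ).det : ℝ) • c = c ᵥ* ((A * Aᵀ).map f * ((A * Aᵀ).map f).adjugate) := by
        rw [mul_adjugate, vecMul_smul, vecMul_one, Int.cast_det]; rfl
    _ = (c ᵥ* A.map f) ᵥ* ((Aᵀ * (A * Aᵀ).adjugate).map f) := by
        rw [vecMul_vecMul, ← hadj, ← Matrix.map_mul, ← Matrix.map_mul, Matrix.mul_assoc]
    _ = _ := by
        rw [show A.map f = A.map (↑) from rfl, h]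
        funext i
        exact (f.map_vecMul _ m i).symm

theorem det_mul_transpose_toNat_smul_mem_closure (A : Matrix ι κ ℤ)
    (hA : Injective fun c : ι → ℝ => c ᵥ* A.map (↑)) {c : ι → ℝ} (hc : 0 ≤ c)
    {m : κ → ℤ} (h : c ᵥ* A.map (↑) = fun j => (m j : ℝ)) :
    (A * Aᵀ).det.toNat • m ∈ AddSubmonoid.closure (Set.range A.row) := by
  set d := (A * Aᵀ).det
  set a := m ᵥ* (Aᵀ * (A * Aᵀ).adjugate)
  have hd : 0 < d := det_mul_transpose_pos_of_injective A hA
  have hca : (d : ℝ) • c = fun i => (a i : ℝ) := det_mul_transpose_smul_eq_of_vecMul_eq A h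
  have ha : 0 ≤ a := fun i => Int.cast_nonneg_iff.mp <| by
    rw [← congrFun hca i]
    exact mul_nonneg (by exact_mod_cast hd.le) (hc i)
  have hdm : a ᵥ* A = d • m := by
    refine Int.cast_injective (α := ℝ) |>.comp_left (funext fun j => ?_)
    have hj := (Int.castRingHom ℝ).map_vecMul A a j
    rw [show ⇑(Int.castRingHom ℝ) ∘ a = (d : ℝ) • c from hca.symm, smul_vecMul] at hj
    simpa [h] using hj
  rw [AddSubmonoid.mem_closure_range_iff_of_fintype]
  refine ⟨fun i => (a i).toNat, ?_⟩
  rw [← natCast_zsmul, Int.toNat_of_nonneg hd.le, ← hdm, vecMul_eq_sum]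
  congr 1
  funext i
  rw [← natCast_zsmul, Int.toNat_of_nonneg (ha i)]
  rfl

end Matrix

section GramDet

variable {ι κ : Type*} [Fintype κ] [DecidableEq ι]

def gramDet (g : ι → κ → ℤ) (t : Finset ι) : ℕ :=
  (Matrix.of (fun i : t => g i) * (Matrix.of fun i : t => g i)ᵀ).det.toNat

variable (g : ι → κ → ℤ) {t : Finset ι} (ht : LinearIndepOn ℝ (fun i j => (g i j : ℝ)) ↑t)
include ht

theorem gramDet_pos : 0 < gramDet g t :=
  Int.lt_toNat.mpr <| det_mul_transpose_pos_of_injective (Matrix.of fun i : t => g i)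
    (vecMul_injective_iff.mpr ht)

theorem gramDet_nsmul_mem_closure [Fintype ι] {c : ι → ℝ} (hc : 0 ≤ c) (hct : support c ⊆ ↑t)
    {m : κ → ℤ} (hm : (fun j => (m j : ℝ)) = ∑ i, c i • fun j => (g i j : ℝ)) :
    gramDet g t • m ∈ AddSubmonoid.closure (Set.range g) := by
  have hvec : (fun i : t => c i) ᵥ* (Matrix.of fun i : t => g i).map (↑) =
      fun j => (m j : ℝ) := by
    rw [vecMul_eq_sum, hm]
    exact (Finset.sum_coe_sort t fun i => c i • fun j => (g i j : ℝ)).trans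
      (Finset.sum_subset (Finset.subset_univ t) fun i _ hi => by
        rw [notMem_support.mp fun h => hi (hct h), zero_smul])
  refine AddSubmonoid.closure_mono ?_ (det_mul_transpose_toNat_smul_mem_closure
    (Matrix.of fun i : t => g i) (vecMul_injective_iff.mpr ht) (fun i => hc i) hvec)
  exact Set.range_subset_iff.mpr fun i => Set.mem_range_self (i : ι)

end GramDet

theorem exists_pos_nsmul_mem_closure_range_of_mem_cone {ι κ : Type*} [Fintype ι] [Fintype κ]
    (g : ι → κ → ℤ) :
    ∃ d : ℕ, 0 < d ∧ ∀ (m : κ → ℤ) (c : ι → ℝ), 0 ≤ c →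
      (fun j => (m j : ℝ)) = ∑ i, c i • (fun j => (g i j : ℝ)) →
      d • m ∈ AddSubmonoid.closure (Set.range g) := by
  classical
  set T := Finset.univ.filter fun t : Finset ι => LinearIndepOn ℝ (fun i j => (g i j : ℝ)) ↑t
  refine ⟨∏ t ∈ T, gramDet g t,
    Finset.prod_pos fun t ht => gramDet_pos g (Finset.mem_filter.mp ht).2, fun m c hc hmc => ?_⟩
  obtain ⟨c', hc', hind, hsum⟩ := exists_nonneg_linearIndepOn_support_sum_smul_eq
    (fun i j => (g i j : ℝ)) hc
  set t := (Set.toFinite (support c')).toFinset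
  have ht : t ∈ T := by simpa [T, t] using hind
  obtain ⟨k, hk⟩ := Finset.dvd_prod_of_mem (gramDet g) ht
  rw [hk, mul_comm, mul_smul]
  exact nsmul_mem (gramDet_nsmul_mem_closure g (by simpa [t] using hind) hc' (by simp [t])
    (hmc.trans hsum.symm)) k

theorem stmt10_general {r p : ℕ} (g : Fin p → (Fin r → ℤ)) (C : Set (Fin r → ℝ))
    (hC : C = {x | ∃ c : Fin p → ℝ, (∀ i, 0 ≤ c i) ∧
      x = ∑ i, c i • (fun j => ((g i j : ℝ)))}) :
    ∃ d : ℕ, 0 < d ∧ ∀ m : Fin r → ℤ, (fun j => ((m j : ℝ))) ∈ C →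
      ∃ a : Fin p → ℕ, (fun j => (d : ℤ) * m j) = ∑ i, (a i : ℤ) • g i := by
  obtain ⟨d, hd, hdm⟩ := exists_pos_nsmul_mem_closure_range_of_mem_cone g
  refine ⟨d, hd, fun m hm => ?_⟩
  rw [hC] at hm
  obtain ⟨c, hc, hmc⟩ := hm
  obtain ⟨a, ha⟩ := AddSubmonoid.mem_closure_range_iff_of_fintype.mp (hdm m c hc hmc)
  refine ⟨a, ?_⟩
  convert ha using 1
  · ext j
    simp
  · simp

/-- Lemma 4.5: let `C ⊆ ℝʳ` be the rational polyhedral strongly convex cone generated by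
lattice vectors `g₁, …, g_p` (e.g. the primitive integral generators of its rays).
Then there is a positive integer `d` such that for every lattice point `m ∈ C`,
the element `d·m` lies in the subsemigroup generated by `g₁, …, g_p`. -/
theorem stmt10 {r p : ℕ} (g : Fin p → (Fin r → ℤ)) (C : Set (Fin r → ℝ))
    (hC : C = {x | ∃ c : Fin p → ℝ, (∀ i, 0 ≤ c i) ∧
      x = ∑ i, c i • (fun j => ((g i j : ℝ)))})
    (hstrconv : ∀ x ∈ C, -x ∈ C → x = 0) :
    ∃ d : ℕ, 0 < d ∧ ∀ m : Fin r → ℤ, (fun j => ((m j : ℝ))) ∈ C →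
      ∃ a : Fin p → ℕ, (fun j => (d : ℤ) * m j) = ∑ i, (a i : ℤ) • g i :=
  stmt10_general g C hC
end
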